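/- arXiv:1005.5414 — 2 statements merged into one kernel-verified Lean document; each statement's English description precedes it below -/
import Mathlib

section
/- Let f : 𝔘 → [0,1] be measurable, and let 𝒞 and 𝓑 be measurable ordered partitions of 𝔘 associated to partitions 𝒞* and 𝓑* of N = {1,…,n}, with 𝒞 ≤_ref 𝓑 (every set of 𝒞 is a union of sets of 𝓑). Then the censored maximum estimators satisfy W_CS^𝒞 ≤_st W_CS^𝓑, i.e. P(W_CS^𝒞 > t) ≤ P(W_CS^𝓑 > t) for all real t. -/
open MeasureTheory ProbabilityTheory

/-- A measurable ordered partition of `𝔘` associated to a partition of `N = {1,…,n}`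
(modelled as `Fin n`).  The partition of `Fin n` is encoded by the fiber map `idx`:
the block `B*` corresponding to the stratum `sets i` is the fiber `{j | idx j = i}`,
so that `P(U ∈ B_i) = |B_i*| / n` with every `|B_i*|` a positive integer. -/
structure StratPart (𝔘 : Type*) [MeasurableSpace 𝔘] (μ : Measure 𝔘) (n : ℕ) where
  b : ℕ
  sets : Fin b → Set 𝔘
  meas : ∀ i, MeasurableSet (sets i)
  disj : Pairwise (Function.onFun Disjoint sets)
  cover : (⋃ i, sets i) = Set.univ
  idx : Fin n → Fin b
  idx_surj : Function.Surjective idx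
  prob : ∀ i, μ (sets i) =
    ((Finset.univ.filter fun j => idx j = i).card : ENNReal) / (n : ENNReal)

/-- `|B_i*|`, the number of sample indices assigned to stratum `i`. -/
def StratPart.blockCard {𝔘 : Type*} [MeasurableSpace 𝔘] {μ : Measure 𝔘} {n : ℕ}
    (B : StratPart 𝔘 μ n) (i : Fin B.b) : ℕ :=
  (Finset.univ.filter fun j => B.idx j = i).card

/-- `C ≤_ref B` : every set of `C` is a union of sets of `B`, with the associated
partitions of `Fin n` refining compatibly. -/
def StratPart.Refines {𝔘 : Type*} [MeasurableSpace 𝔘] {μ : Measure 𝔘} {n : ℕ}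
    (C B : StratPart 𝔘 μ n) : Prop :=
  ∃ ρ : Fin B.b → Fin C.b, (∀ i, B.sets i ⊆ C.sets (ρ i)) ∧ ∀ j, C.idx j = ρ (B.idx j)

/-- A censored stratified sample: the pairs `(V_j, T_j)` are independent across `j`,
`V_j` has the conditional law `P_{U|B}` of the stratum of `j`, `T_j` is uniform on `[0,1]`,
and `V_j` is independent of `T_j` (the law of the pair is the product law). -/
def IsCensoredStratSample {Ω 𝔘 : Type*} [MeasurableSpace Ω] [MeasurableSpace 𝔘]
    {μ : Measure 𝔘} {n : ℕ} (B : StratPart 𝔘 μ n) (P : Measure Ω)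
    (V : Fin n → Ω → 𝔘) (T : Fin n → Ω → ℝ) : Prop :=
  (∀ j, Measurable (V j)) ∧ (∀ j, Measurable (T j)) ∧
    iIndepFun (fun j ω => (V j ω, T j ω)) P ∧
    ∀ j, Measure.map (fun ω => (V j ω, T j ω)) P =
      (μ[|B.sets (B.idx j)]).prod (volume.restrict (Set.Icc (0:ℝ) 1))

/-- The censored maximum estimator `W_CS^𝓑 = max {T_j : j ∈ S^𝓑}`, equal to `0` when
`S^𝓑 = {j : T_j ≤ f(V_j)}` is empty (the empty supremum in `ℝ` is `0`). -/
noncomputable def WCS {Ω 𝔘 : Type*} {n : ℕ} (f : 𝔘 → ℝ) (V : Fin n → Ω → 𝔘)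
    (T : Fin n → Ω → ℝ) (ω : Ω) : ℝ :=
  ⨆ j : {j : Fin n // T j ω ≤ f (V j ω)}, T j.1 ω

/-!
For `t < 0` both events are almost sure, since every `T_j` is nonnegative. For `t ≥ 0`,
`W > t` iff some pair `(V_j, T_j)` lands in `D = {t < T ≤ f(V)}`, so by independence
`P(W > t) = 1 - ∏ⱼ qⱼ` with `qⱼ = P((V_j, T_j) ∉ D)`, the mean over the stratum of `j` of the
slice measure `h(u) = λ([0,1] ∖ (t, f u])`. Since every stratum has mass `|B*|/n`, summing
`qⱼ` over a block of `𝒞*` gives `n ∫_C h` whether it is computed with `𝓑` or with `𝒞`: passing to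
the coarser partition replaces the `qⱼ` of each block by their average, which by AM-GM can only
increase the product.
-/

open scoped ENNReal Finset

theorem Real.prod_le_pow_card_of_sum_eq {ι : Type*} {s : Finset ι} {z : ι → ℝ} {c : ℝ}
    (hz : ∀ i ∈ s, 0 ≤ z i) (hsum : ∑ i ∈ s, z i = #s * c) : ∏ i ∈ s, z i ≤ c ^ #s := by
  rcases s.eq_empty_or_nonempty with rfl | hs
  · simp
  have hcard : (#s : ℝ) ≠ 0 := by exact_mod_cast hs.card_pos.ne'
  have hmean : ∏ i ∈ s, z i ^ (#s : ℝ)⁻¹ ≤ c := by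
    calc ∏ i ∈ s, z i ^ (#s : ℝ)⁻¹ ≤ ∑ i ∈ s, (#s : ℝ)⁻¹ * z i :=
          Real.geom_mean_le_arith_mean_weighted s _ z (fun _ _ => by positivity)
            (by simp [hcard]) hz
      _ = c := by rw [← Finset.mul_sum, hsum, inv_mul_cancel_left₀ hcard]
  calc ∏ i ∈ s, z i = (∏ i ∈ s, z i ^ (#s : ℝ)⁻¹) ^ #s := by
        rw [← Finset.prod_pow]
        exact Finset.prod_congr rfl fun i hi =>
          (Real.rpow_inv_natCast_pow (hz i hi) hs.card_pos.ne').symm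
    _ ≤ c ^ #s :=
        pow_le_pow_left₀ (Finset.prod_nonneg fun i hi => by have := hz i hi; positivity) hmean _

theorem ENNReal.prod_le_pow_card_of_sum_eq {ι : Type*} {s : Finset ι} {x : ι → ℝ≥0∞} {c : ℝ≥0∞}
    (hx : ∀ i ∈ s, x i ≠ ∞) (hsum : ∑ i ∈ s, x i = #s * c) : ∏ i ∈ s, x i ≤ c ^ #s := by
  rcases s.eq_empty_or_nonempty with rfl | hs
  · simp
  have hc : c ≠ ∞ := by
    intro hc
    rw [hc, ENNReal.mul_top (by exact_mod_cast hs.card_pos.ne')] at hsum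
    exact ENNReal.sum_ne_top.2 hx hsum
  rw [← ENNReal.toReal_le_toReal (ENNReal.prod_ne_top hx) (ENNReal.pow_ne_top hc),
    ENNReal.toReal_prod, ENNReal.toReal_pow]
  refine Real.prod_le_pow_card_of_sum_eq (fun _ _ => ENNReal.toReal_nonneg) ?_
  rw [← ENNReal.toReal_sum hx, hsum, ENNReal.toReal_mul, ENNReal.toReal_natCast]

theorem ENNReal.prod_le_prod_of_sum_fiberwise_eq {ι κ : Type*} [Fintype ι] [Fintype κ]
    [DecidableEq κ] (g : ι → κ) {x : ι → ℝ≥0∞} {c : κ → ℝ≥0∞} (hx : ∀ i, x i ≠ ∞)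
    (hsum : ∀ k, ∑ i with g i = k, x i = #{i | g i = k} * c k) :
    ∏ i, x i ≤ ∏ i, c (g i) := by
  rw [← Finset.prod_fiberwise Finset.univ g x, ← Finset.prod_fiberwise' Finset.univ g c]
  refine Finset.prod_le_prod' fun k _ => ?_
  rw [Finset.prod_const]
  exact ENNReal.prod_le_pow_card_of_sum_eq (fun i _ => hx i) (hsum k)

namespace StratPart

variable {𝔘 : Type*} [MeasurableSpace 𝔘] {μ : Measure 𝔘} {n : ℕ}

lemma blockCard_pos (B : StratPart 𝔘 μ n) (i : Fin B.b) : 0 < B.blockCard i := by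
  obtain ⟨j, rfl⟩ := B.idx_surj i
  exact Finset.card_pos.2 ⟨j, by simp⟩

lemma blockCard_mul_inv_measure (B : StratPart 𝔘 μ n) (i : Fin B.b) :
    (B.blockCard i : ℝ≥0∞) * (μ (B.sets i))⁻¹ = n := by
  have hk : (B.blockCard i : ℝ≥0∞) ≠ 0 := by exact_mod_cast (B.blockCard_pos i).ne'
  rw [B.prob i, ← blockCard, ENNReal.inv_div (Or.inr (ENNReal.natCast_ne_top _)) (Or.inr hk),
    ENNReal.mul_div_cancel hk (ENNReal.natCast_ne_top _)]

lemma blockCard_mul_lintegral_cond (B : StratPart 𝔘 μ n) (h : 𝔘 → ℝ≥0∞) (i : Fin B.b) :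
    (B.blockCard i : ℝ≥0∞) * ∫⁻ u, h u ∂μ[|B.sets i] = n * ∫⁻ u in B.sets i, h u ∂μ := by
  rw [ProbabilityTheory.cond, lintegral_smul_measure, smul_eq_mul, ← mul_assoc,
    blockCard_mul_inv_measure]

lemma sets_eq_biUnion_of_subset {C B : StratPart 𝔘 μ n} (ρ : Fin B.b → Fin C.b)
    (hρ : ∀ i, B.sets i ⊆ C.sets (ρ i)) (m : Fin C.b) :
    C.sets m = ⋃ i ∈ Finset.univ.filter fun i => ρ i = m, B.sets i := by
  ext u
  simp only [Finset.mem_filter, Finset.mem_univ, true_and, Set.mem_iUnion, exists_prop]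
  refine ⟨fun hu => ?_, fun ⟨i, hi, hu⟩ => hi ▸ hρ i hu⟩
  obtain ⟨i, hi⟩ := Set.mem_iUnion.1 (B.cover.symm ▸ Set.mem_univ u : u ∈ ⋃ i, B.sets i)
  refine ⟨i, ?_, hi⟩
  by_contra hne
  exact Set.disjoint_left.1 (C.disj hne) (hρ i hi) hu

lemma Refines.sum_lintegral_cond_eq {C B : StratPart 𝔘 μ n} (href : C.Refines B)
    (h : 𝔘 → ℝ≥0∞) (m : Fin C.b) :
    ∑ j with C.idx j = m, ∫⁻ u, h u ∂μ[|B.sets (B.idx j)] =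
      C.blockCard m * ∫⁻ u, h u ∂μ[|C.sets m] := by
  obtain ⟨ρ, hρ, hidx⟩ := href
  have hfiber : (Finset.univ.filter fun j => C.idx j = m) =
      Finset.univ.filter fun j => B.idx j ∈ Finset.univ.filter fun i => ρ i = m :=
    Finset.filter_congr fun j _ => by simp [hidx j]
  calc ∑ j with C.idx j = m, ∫⁻ u, h u ∂μ[|B.sets (B.idx j)]
      = ∑ i with ρ i = m, (B.blockCard i : ℝ≥0∞) * ∫⁻ u, h u ∂μ[|B.sets i] := by
        rw [hfiber,
          ← Finset.sum_fiberwise_eq_sum_filter' _ _ B.idx fun i => ∫⁻ u, h u ∂μ[|B.sets i]]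
        simp only [Finset.sum_const, nsmul_eq_mul, blockCard]
    _ = n * ∫⁻ u in C.sets m, h u ∂μ := by
        simp only [blockCard_mul_lintegral_cond, ← Finset.mul_sum]
        rw [sets_eq_biUnion_of_subset ρ hρ m,
          lintegral_biUnion_finset (fun i _ i' _ hii' => B.disj hii') (fun i _ => B.meas i)]
    _ = C.blockCard m * ∫⁻ u, h u ∂μ[|C.sets m] := (C.blockCard_mul_lintegral_cond h m).symm

end StratPart

theorem ProbabilityTheory.iIndepFun.measure_iUnion_preimage_eq_one_sub_prod {Ω ι β : Type*}
    [MeasurableSpace Ω] [MeasurableSpace β] [Fintype ι] {P : Measure Ω} [IsProbabilityMeasure P]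
    {X : ι → Ω → β} (hX : iIndepFun X P) (hXm : ∀ i, Measurable (X i)) {D : Set β}
    (hD : MeasurableSet D) :
    P (⋃ i, X i ⁻¹' D) = 1 - ∏ i, P (X i ⁻¹' Dᶜ) := by
  rw [← compl_compl (⋃ i, X i ⁻¹' D),
    prob_compl_eq_one_sub (MeasurableSet.iUnion fun i => hXm i hD).compl, Set.compl_iUnion]
  congr 1
  simpa using hX.measure_inter_preimage_eq_mul Finset.univ fun _ _ => hD.compl

lemma lt_WCS_iff {Ω 𝔘 : Type*} {n : ℕ} {f : 𝔘 → ℝ} {V : Fin n → Ω → 𝔘} {T : Fin n → Ω → ℝ}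
    {t : ℝ} (ht : 0 ≤ t) (ω : Ω) :
    t < WCS f V T ω ↔ ∃ j, t < T j ω ∧ T j ω ≤ f (V j ω) := by
  rcases isEmpty_or_nonempty {j : Fin n // T j ω ≤ f (V j ω)} with hS | hS
  · simp only [WCS, Real.iSup_of_isEmpty]
    exact ⟨fun h => absurd h ht.not_gt, fun ⟨j, _, hj⟩ => (hS.false ⟨j, hj⟩).elim⟩
  · simp only [WCS, lt_ciSup_iff (Set.finite_range _).bddAbove, Subtype.exists, exists_prop]
    exact exists_congr fun j => and_comm

lemma WCS_nonneg {Ω 𝔘 : Type*} {n : ℕ} {f : 𝔘 → ℝ} {V : Fin n → Ω → 𝔘} {T : Fin n → Ω → ℝ}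
    {ω : Ω} (hT : ∀ j, 0 ≤ T j ω) : 0 ≤ WCS f V T ω :=
  Real.iSup_nonneg fun j => hT j.1

lemma measurableSet_lt_snd_le {𝔘 : Type*} [MeasurableSpace 𝔘] {f : 𝔘 → ℝ} (hf : Measurable f)
    (t : ℝ) : MeasurableSet {p : 𝔘 × ℝ | t < p.2 ∧ p.2 ≤ f p.1} :=
  (measurableSet_lt measurable_const measurable_snd).inter
    (measurableSet_le measurable_snd (hf.comp measurable_fst))

namespace IsCensoredStratSample

variable {Ω 𝔘 : Type*} [MeasurableSpace Ω] [MeasurableSpace 𝔘] {μ : Measure 𝔘}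
  {P : Measure Ω} {n : ℕ} {B : StratPart 𝔘 μ n}
  {V : Fin n → Ω → 𝔘} {T : Fin n → Ω → ℝ}

lemma measure_preimage_pair (h : IsCensoredStratSample B P V T) (j : Fin n)
    {E : Set (𝔘 × ℝ)} (hE : MeasurableSet E) :
    P ((fun ω => (V j ω, T j ω)) ⁻¹' E) =
      ∫⁻ u, volume.restrict (Set.Icc (0:ℝ) 1) (Prod.mk u ⁻¹' E) ∂μ[|B.sets (B.idx j)] := by
  rw [← Measure.map_apply ((h.1 j).prodMk (h.2.1 j)) hE, h.2.2.2 j, Measure.prod_apply hE]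

lemma ae_nonneg (h : IsCensoredStratSample B P V T) : ∀ᵐ ω ∂P, ∀ j, 0 ≤ T j ω := by
  refine ae_all_iff.2 fun j => ae_iff.2 ?_
  have hnull : volume.restrict (Set.Icc (0:ℝ) 1) (Set.Iio 0) = 0 := by
    rw [Measure.restrict_apply measurableSet_Iio,
      ((Set.Iio_disjoint_Ici le_rfl).mono_right Set.Icc_subset_Ici_self).inter_eq, measure_empty]
  have hset : {ω | ¬ 0 ≤ T j ω} = (fun ω => (V j ω, T j ω)) ⁻¹' {p | p.2 < 0} := by
    ext ω
    simp
  rw [hset, h.measure_preimage_pair j (measurableSet_lt measurable_snd measurable_const)]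
  change ∫⁻ _, volume.restrict (Set.Icc (0:ℝ) 1) (Set.Iio 0) ∂_ = 0
  rw [hnull, lintegral_zero]

lemma measure_lt_WCS_of_neg [IsProbabilityMeasure P] (h : IsCensoredStratSample B P V T)
    (f : 𝔘 → ℝ) {t : ℝ} (ht : t < 0) : P {ω | t < WCS f V T ω} = 1 := by
  refine (measure_congr (ae_eq_univ.2 (ae_iff.1 ?_))).trans measure_univ
  filter_upwards [h.ae_nonneg] with ω hω using ht.trans_le (WCS_nonneg hω)

lemma measure_lt_WCS [IsProbabilityMeasure P] (h : IsCensoredStratSample B P V T)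
    {f : 𝔘 → ℝ} (hf : Measurable f) {t : ℝ} (ht : 0 ≤ t) :
    P {ω | t < WCS f V T ω} =
      1 - ∏ j, P ((fun ω => (V j ω, T j ω)) ⁻¹' {p | t < p.2 ∧ p.2 ≤ f p.1}ᶜ) := by
  rw [← h.2.2.1.measure_iUnion_preimage_eq_one_sub_prod (fun j => (h.1 j).prodMk (h.2.1 j))
    (measurableSet_lt_snd_le hf t)]
  congr 1
  ext ω
  simp [lt_WCS_iff ht]

end IsCensoredStratSample

theorem censored_max_stochastic_order_general
    {Ω 𝔘 : Type*} [MeasurableSpace Ω] [MeasurableSpace 𝔘]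
    (μ : Measure 𝔘)
    (P : Measure Ω) [IsProbabilityMeasure P]
    (n : ℕ) (f : 𝔘 → ℝ) (hf : Measurable f)
    (C B : StratPart 𝔘 μ n) (href : C.Refines B)
    (VB VC : Fin n → Ω → 𝔘) (TB TC : Fin n → Ω → ℝ)
    (hVB : IsCensoredStratSample B P VB TB)
    (hVC : IsCensoredStratSample C P VC TC) :
    ∀ t : ℝ, P {ω | t < WCS f VC TC ω} ≤ P {ω | t < WCS f VB TB ω} := by
  intro t
  rcases lt_or_ge t 0 with ht | ht
  · exact (hVB.measure_lt_WCS_of_neg f ht).symm ▸ prob_le_one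
  rw [hVC.measure_lt_WCS hf ht, hVB.measure_lt_WCS hf ht]
  set D : Set (𝔘 × ℝ) := {p | t < p.2 ∧ p.2 ≤ f p.1}
  have hD : MeasurableSet Dᶜ := (measurableSet_lt_snd_le hf t).compl
  refine tsub_le_tsub_left ?_ 1
  have hfinite : ∀ j, P ((fun ω => (VB j ω, TB j ω)) ⁻¹' Dᶜ) ≠ ⊤ := fun j => measure_ne_top _ _
  simp_rw [hVB.measure_preimage_pair _ hD, hVC.measure_preimage_pair _ hD] at hfinite ⊢
  exact ENNReal.prod_le_prod_of_sum_fiberwise_eq C.idx hfinite (href.sum_lintegral_cond_eq _)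

/-- Theorem 3.2: with censored observations, if `𝒞 ≤_ref 𝓑` then
`W_CS^𝒞 ≤_st W_CS^𝓑`. -/
theorem censored_max_stochastic_order
    {Ω 𝔘 : Type*} [MeasurableSpace Ω] [MeasurableSpace 𝔘]
    (μ : Measure 𝔘) [IsProbabilityMeasure μ] [NullSingletonClass μ]
    (P : Measure Ω) [IsProbabilityMeasure P]
    (n : ℕ) [NeZero n] (f : 𝔘 → ℝ) (hf : Measurable f)
    (hf01 : ∀ u, f u ∈ Set.Icc (0:ℝ) 1)
    (C B : StratPart 𝔘 μ n) (href : C.Refines B)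
    (VB VC : Fin n → Ω → 𝔘) (TB TC : Fin n → Ω → ℝ)
    (hVB : IsCensoredStratSample B P VB TB)
    (hVC : IsCensoredStratSample C P VC TC) :
    ∀ t : ℝ, P {ω | t < WCS f VC TC ω} ≤ P {ω | t < WCS f VB TB ω} :=
  censored_max_stochastic_order_general μ P n f hf C B href VB VC TB TC hVB hVC
end

section
/- Let 𝓑* = (B_1*, …, B_b*) be a partition of N = {1,…,n} and let {ξ_j^{B*} : B* ∈ 𝓑*, j ∈ B*} be independent real-valued random variables such that variables indexed by the same block B* are identically distributed. Let 𝒞* = (C_1*, …, C_c*) be a partition of N with 𝒞* ≤_ref 𝓑* (every block of 𝒞* is a union of blocks of 𝓑*), and let {ξ_j^{C*} : C* ∈ 𝒞*, j ∈ C*} be independent random variables where ξ_j^{C*} has the mixture law Σ_{B* ⊆ C*} (|B*|/|C*|) · L(ξ_1^{B*}). Then max_{C* ∈ 𝒞*} max_{j ∈ C*} ξ_j^{C*} ≤_st max_{B* ∈ 𝓑*} max_{j ∈ B*} ξ_j^{B*}. -/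
/-!
`P(max_j ξ_j ≤ t)` factorises over the independent coordinates into a product of marginal
distribution functions. Write `a_B` for the common distribution function of block `B*`. The
`𝓑*`-product is `∏_B a_B^{|B|}`, and the `𝒞*`-product is `∏_C (∑_{B ⊆ C} (|B|/|C|) a_B)^{|C|}`;
they compare block by block of `𝒞*` by the weighted AM–GM inequality with weights `|B|/|C|`.
-/

open MeasureTheory ProbabilityTheory Finset
open scoped ENNReal

theorem Real.prod_pow_le_weighted_mean_pow {ι : Type*} (s : Finset ι) (N : ι → ℕ) {a : ι → ℝ}
    (ha : ∀ i ∈ s, 0 ≤ a i) :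
    ∏ i ∈ s, a i ^ N i ≤ (∑ i ∈ s, (N i / ∑ j ∈ s, N j : ℝ) * a i) ^ ∑ i ∈ s, N i := by
  set M := ∑ j ∈ s, N j
  rcases Nat.eq_zero_or_pos M with hM0 | hMpos
  · have hN : ∀ i ∈ s, N i = 0 := sum_eq_zero_iff.1 hM0
    rw [hM0, pow_zero]
    exact (prod_eq_one fun i hi => by rw [hN i hi, pow_zero]).le
  have hMne : (M : ℝ) ≠ 0 := by positivity
  have hw : ∑ i ∈ s, (N i / M : ℝ) = 1 := by
    rw [← sum_div, ← Nat.cast_sum, div_self hMne]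
  have amgm := Real.geom_mean_le_arith_mean_weighted s (fun i => (N i / M : ℝ)) a
    (fun i _ => by positivity) hw ha
  calc ∏ i ∈ s, a i ^ N i
      = (∏ i ∈ s, a i ^ (N i / M : ℝ)) ^ M := by
        rw [← prod_pow]
        refine prod_congr rfl fun i hi => ?_
        rw [← Real.rpow_natCast _ M, ← Real.rpow_natCast (a i), ← Real.rpow_mul (ha i hi),
          div_mul_cancel₀ _ hMne]
    _ ≤ _ := pow_le_pow_left₀ (prod_nonneg fun i hi => Real.rpow_nonneg (ha i hi) _) amgm _

theorem ENNReal.prod_pow_le_weighted_mean_pow {ι : Type*} (s : Finset ι) (N : ι → ℕ)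
    {a : ι → ℝ≥0∞} (ha : ∀ i ∈ s, a i ≠ ∞) :
    ∏ i ∈ s, a i ^ N i ≤ (∑ i ∈ s, (N i / ∑ j ∈ s, N j : ℝ≥0∞) * a i) ^ ∑ i ∈ s, N i := by
  set M := ∑ j ∈ s, N j with hM
  rcases Nat.eq_zero_or_pos M with hM0 | hMpos
  · have hN : ∀ i ∈ s, N i = 0 := sum_eq_zero_iff.1 hM0
    rw [hM0, pow_zero]
    exact (prod_eq_one fun i hi => by rw [hN i hi, pow_zero]).le
  have hterm : ∀ i ∈ s, (N i / M : ℝ≥0∞) * a i ≠ ∞ := fun i hi =>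
    mul_ne_top (div_ne_top (natCast_ne_top _) (by positivity)) (ha i hi)
  rw [← toReal_le_toReal (prod_ne_top fun i hi => pow_ne_top (ha i hi))
      (pow_ne_top (sum_ne_top.2 hterm)),
    toReal_prod, toReal_pow, toReal_sum hterm]
  simpa only [toReal_pow, toReal_mul, toReal_div, toReal_natCast, hM] using
    Real.prod_pow_le_weighted_mean_pow s N fun i _ => toReal_nonneg

theorem Finset.prod_comp_eq_prod_pow_card_fiber {ι κ M : Type*} [Fintype ι] [Fintype κ]
    [DecidableEq κ] [CommMonoid M] (f : κ → M) (g : ι → κ) :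
    ∏ j, f (g j) = ∏ i, f i ^ #{j | g j = i} := by
  rw [← prod_fiberwise' univ g f]
  exact prod_congr rfl fun i _ => prod_const _

theorem Finset.card_fiber_comp {ι κ γ : Type*} [Fintype ι] [Fintype κ] [DecidableEq κ]
    [DecidableEq γ] (g : ι → κ) (ρ : κ → γ) (c : γ) :
    #{j | ρ (g j) = c} = ∑ i with ρ i = c, #{j | g j = i} := by
  rw [card_eq_sum_card_fiberwise (f := g) (t := {i | ρ i = c}) fun j hj => by simpa using hj]
  refine sum_congr rfl fun i hi => ?_
  rw [filter_filter]
  exact congrArg card (filter_congr fun j _ =>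
    and_iff_right_of_imp fun hj => hj ▸ (mem_filter.1 hi).2)

theorem ENNReal.prod_comp_le_prod_block_mean {ι κ γ : Type*} [Fintype ι] [Fintype κ] [Fintype γ]
    [DecidableEq κ] [DecidableEq γ] (g : ι → κ) (ρ : κ → γ) {a : κ → ℝ≥0∞} (ha : ∀ i, a i ≠ ∞) :
    ∏ j, a (g j) ≤ ∏ j, ∑ i with ρ i = ρ (g j),
      ((#{j' | g j' = i} : ℝ≥0∞) / #{j' | ρ (g j') = ρ (g j)}) * a i := by
  set mean : γ → ℝ≥0∞ := fun c =>
    ∑ i with ρ i = c, ((#{j' | g j' = i} : ℝ≥0∞) / #{j' | ρ (g j') = c}) * a i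
  change ∏ j, a (g j) ≤ ∏ j, mean (ρ (g j))
  rw [prod_comp_eq_prod_pow_card_fiber a g, prod_comp_eq_prod_pow_card_fiber mean fun j => ρ (g j),
    ← prod_fiberwise univ ρ]
  refine prod_le_prod' fun c _ => ?_
  simp only [mean, card_fiber_comp g ρ c]
  exact prod_pow_le_weighted_mean_pow _ (fun i => #{j | g j = i}) fun i _ => ha i

theorem ProbabilityTheory.iIndepFun.measure_lt_iSup {Ω ι : Type*} [MeasurableSpace Ω]
    {P : Measure Ω} [IsProbabilityMeasure P] [Fintype ι] [Nonempty ι] {X : ι → Ω → ℝ}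
    (hind : iIndepFun X P) (hX : ∀ i, Measurable (X i)) (t : ℝ) :
    P {ω | t < ⨆ i, X i ω} = 1 - ∏ i, P.map (X i) (Set.Iic t) := by
  have hset : {ω | t < ⨆ i, X i ω} = (⋂ i, X i ⁻¹' Set.Iic t)ᶜ := by
    ext ω
    simpa [not_forall] using lt_ciSup_iff (Set.finite_range fun i => X i ω).bddAbove
  rw [hset, prob_compl_eq_one_sub (.iInter fun i => hX i measurableSet_Iic),
    hind.meas_iInter fun i => ⟨_, measurableSet_Iic, rfl⟩]
  simp only [Measure.map_apply (hX _) measurableSet_Iic]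

theorem mixture_max_stochastic_order_general
    {Ω : Type*} [MeasurableSpace Ω] (P : Measure Ω) [IsProbabilityMeasure P]
    (n b c : ℕ) [NeZero n]
    (idxB : Fin n → Fin b)
    (idxC : Fin n → Fin c)
    (ρ : Fin b → Fin c) (href : ∀ j, idxC j = ρ (idxB j))
    (rep : Fin b → Fin n) (hrep : ∀ i, idxB (rep i) = i)
    (ξB ξC : Fin n → Ω → ℝ)
    (hmB : ∀ j, Measurable (ξB j)) (hmC : ∀ j, Measurable (ξC j))
    (hindB : iIndepFun ξB P)
    (hindC : iIndepFun ξC P)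
    (hident : ∀ j j', idxB j = idxB j' → Measure.map (ξB j) P = Measure.map (ξB j') P)
    (hmix : ∀ j, Measure.map (ξC j) P =
      ∑ i ∈ Finset.univ.filter (fun i => ρ i = idxC j),
        (((Finset.univ.filter fun j' => idxB j' = i).card : ENNReal) /
          ((Finset.univ.filter fun j' => idxC j' = idxC j).card : ENNReal)) •
          Measure.map (ξB (rep i)) P) :
    ∀ t : ℝ, P {ω | t < ⨆ j, ξC j ω} ≤ P {ω | t < ⨆ j, ξB j ω} := by
  intro t
  obtain rfl : idxC = fun j => ρ (idxB j) := funext href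
  set a : Fin b → ℝ≥0∞ := fun i => P.map (ξB (rep i)) (Set.Iic t)
  have hcdfB : ∀ j, P.map (ξB j) (Set.Iic t) = a (idxB j) := fun j => by
    rw [hident j _ (hrep _).symm]
  have hcdfC : ∀ j, P.map (ξC j) (Set.Iic t) = ∑ i with ρ i = ρ (idxB j),
      ((#{j' | idxB j' = i} : ℝ≥0∞) / #{j' | ρ (idxB j') = ρ (idxB j)}) * a i := fun j => by
    rw [hmix j]
    simp only [Measure.coe_finsetSum, Finset.sum_apply, Measure.smul_apply, smul_eq_mul, a]
  rw [hindB.measure_lt_iSup hmB, hindC.measure_lt_iSup hmC]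
  refine tsub_le_tsub_left ?_ 1
  simp only [hcdfB, hcdfC]
  exact ENNReal.prod_comp_le_prod_block_mean idxB ρ fun i => measure_ne_top _ _

/-- Lemma A.1: let `𝓑*` be a partition of `Fin n` (encoded by the fiber
map `idxB : Fin n → Fin b`, block `B_i* = {j | idxB j = i}`), `{ξ_j^{B*}}` independent
random variables identically distributed within blocks, `𝒞*` a coarsening of `𝓑*`
(encoded by `idxC = ρ ∘ idxB`), and `{ξ_j^{C*}}` independent with the mixture law
`L(ξ_j^{C*}) = Σ_{B* ⊆ C*} (|B*|/|C*|)·L(ξ_1^{B*})`.  Then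
`max_j ξ_j^{C*} ≤_st max_j ξ_j^{B*}`. -/
theorem mixture_max_stochastic_order
    {Ω : Type*} [MeasurableSpace Ω] (P : Measure Ω) [IsProbabilityMeasure P]
    (n b c : ℕ) [NeZero n]
    (idxB : Fin n → Fin b) (hidxB : Function.Surjective idxB)
    (idxC : Fin n → Fin c) (hidxC : Function.Surjective idxC)
    (ρ : Fin b → Fin c) (href : ∀ j, idxC j = ρ (idxB j))
    (rep : Fin b → Fin n) (hrep : ∀ i, idxB (rep i) = i)
    (ξB ξC : Fin n → Ω → ℝ)
    (hmB : ∀ j, Measurable (ξB j)) (hmC : ∀ j, Measurable (ξC j))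
    (hindB : iIndepFun ξB P)
    (hindC : iIndepFun ξC P)
    (hident : ∀ j j', idxB j = idxB j' → Measure.map (ξB j) P = Measure.map (ξB j') P)
    (hmix : ∀ j, Measure.map (ξC j) P =
      ∑ i ∈ Finset.univ.filter (fun i => ρ i = idxC j),
        (((Finset.univ.filter fun j' => idxB j' = i).card : ENNReal) /
          ((Finset.univ.filter fun j' => idxC j' = idxC j).card : ENNReal)) •
          Measure.map (ξB (rep i)) P) :
    ∀ t : ℝ, P {ω | t < ⨆ j, ξC j ω} ≤ P {ω | t < ⨆ j, ξB j ω} :=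
  mixture_max_stochastic_order_general P n b c idxB idxC ρ href rep hrep ξB ξC hmB hmC hindB hindC
    hident hmix
end
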